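/- If Ψ = Uᵀ D U is a Takagi factorization of a complex symmetric k×k matrix with D = diag(r₁,…,r_k), r₁ > r₂ ≥ … ≥ r_k ≥ 0, and unit vectors α, β satisfy |αᵀ Ψ β| = r₁, then α and β are each equal, up to a complex phase, to U† e₁ where e₁ is the first standard basis vector; in particular α and β agree up to a phase. -/

import Mathlib

open Matrix

/-! In the coordinates `x = U α`, `y = U β` the form `αᵀ Ψ β` becomes `∑ rᵢ xᵢ yᵢ`, and by the
triangle inequality and AM-GM its modulus is at most `∑ rᵢ (|xᵢ|² + |yᵢ|²) / 2`, an average of the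
`rᵢ` with weights summing to one. This average reaches `r₁` only if all the weight sits on indices
with `rᵢ = r₁`, which by the gap is the first index alone; so `x` and `y` are unimodular multiples
of `e₁`, and `α = U† x`, `β = U† y`. -/

section
variable {𝕜 n : Type*} [RCLike 𝕜] [Fintype n]

theorem star_dotProduct_self_eq_sum_norm_sq (v : n → 𝕜) :
    star v ⬝ᵥ v = ((∑ i, ‖v i‖ ^ 2 : ℝ) : 𝕜) := by
  simp [dotProduct, RCLike.conj_mul]

theorem sum_norm_sq_mulVec_of_mem_unitaryGroup [DecidableEq n] {U : Matrix n n 𝕜}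
    (hU : U ∈ unitaryGroup n 𝕜) (v : n → 𝕜) :
    ∑ i, ‖(U *ᵥ v) i‖ ^ 2 = ∑ i, ‖v i‖ ^ 2 := by
  have h : star (U *ᵥ v) ⬝ᵥ (U *ᵥ v) = star v ⬝ᵥ v := by
    rw [star_mulVec, dotProduct_mulVec, vecMul_vecMul, ← star_eq_conjTranspose,
      Unitary.star_mul_self_of_mem hU, vecMul_one]
  rwa [star_dotProduct_self_eq_sum_norm_sq, star_dotProduct_self_eq_sum_norm_sq,
    RCLike.ofReal_inj] at h

theorem conjTranspose_mulVec_mulVec_of_mem_unitaryGroup [DecidableEq n] {U : Matrix n n 𝕜}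
    (hU : U ∈ unitaryGroup n 𝕜) (v : n → 𝕜) :
    Uᴴ *ᵥ (U *ᵥ v) = v := by
  rw [mulVec_mulVec, ← star_eq_conjTranspose, Unitary.star_mul_self_of_mem hU, one_mulVec]

end

theorem dotProduct_transpose_mul_mul_mulVec {R n : Type*} [CommSemiring R] [Fintype n]
    (A U : Matrix n n R) (v w : n → R) :
    v ⬝ᵥ ((Uᵀ * A * U) *ᵥ w) = (U *ᵥ v) ⬝ᵥ (A *ᵥ (U *ᵥ w)) := by
  rw [← mulVec_mulVec, ← mulVec_mulVec, dotProduct_mulVec, vecMul_transpose]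

theorem dotProduct_diagonal_mulVec {R n : Type*} [CommSemiring R] [Fintype n] [DecidableEq n]
    (d v w : n → R) :
    v ⬝ᵥ (diagonal d *ᵥ w) = ∑ i, d i * (v i * w i) := by
  simp only [dotProduct, mulVec_diagonal]; congr 1; ext i; ring

theorem norm_sum_mul_mul_le {ι : Type*} [Fintype ι] {d : ι → ℝ} (hd : ∀ i, 0 ≤ d i)
    (x y : ι → ℂ) :
    ‖∑ i, (d i : ℂ) * (x i * y i)‖ ≤ ∑ i, d i * ((‖x i‖ ^ 2 + ‖y i‖ ^ 2) / 2) := by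
  refine (norm_sum_le _ _).trans (Finset.sum_le_sum fun i _ => ?_)
  rw [norm_mul, norm_mul, Complex.norm_of_nonneg (hd i)]
  exact mul_le_mul_of_nonneg_left (by nlinarith [sq_nonneg (‖x i‖ - ‖y i‖)]) (hd i)

theorem eq_zero_of_le_sum_mul {ι : Type*} [Fintype ι] {a d : ι → ℝ} {M : ℝ}
    (ha : ∀ i, 0 ≤ a i) (hsum : ∑ i, a i = 1) (hd : ∀ i, d i ≤ M)
    (hM : M ≤ ∑ i, d i * a i) {i : ι} (hi : d i < M) : a i = 0 := by
  have hterm : ∀ j ∈ Finset.univ, 0 ≤ (M - d j) * a j :=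
    fun j _ => mul_nonneg (sub_nonneg.2 (hd j)) (ha j)
  have hzero : ∑ j, (M - d j) * a j = 0 := by
    refine le_antisymm ?_ (Finset.sum_nonneg hterm)
    simp only [sub_mul, Finset.sum_sub_distrib, ← Finset.mul_sum, hsum]
    linarith
  have := (Finset.sum_eq_zero_iff_of_nonneg hterm).1 hzero i (Finset.mem_univ i)
  exact (mul_eq_zero.1 this).resolve_left (sub_pos.2 hi).ne'

theorem eq_smul_single_of_sum_norm_sq_eq_one {𝕜 ι : Type*} [RCLike 𝕜] [Fintype ι]
    [DecidableEq ι] {v : ι → 𝕜} (hv : ∑ i, ‖v i‖ ^ 2 = 1) (i₀ : ι)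
    (hzero : ∀ i, i ≠ i₀ → v i = 0) : ‖v i₀‖ = 1 ∧ v = v i₀ • Pi.single i₀ 1 := by
  rw [Finset.sum_eq_single i₀ (fun i _ hi => by simp [hzero i hi]) (by simp),
    pow_eq_one_iff_of_nonneg (norm_nonneg _) two_ne_zero] at hv
  refine ⟨hv, funext fun i => ?_⟩
  by_cases hi : i = i₀
  · subst hi; simp
  · simp [hzero i hi, hi]

theorem eq_zero_of_le_norm_sum_mul_mul {ι : Type*} [Fintype ι] {d : ι → ℝ} (hd : ∀ i, 0 ≤ d i)
    {i₀ : ι} (hgap : ∀ i, i ≠ i₀ → d i < d i₀) {x y : ι → ℂ} (hx : ∑ i, ‖x i‖ ^ 2 = 1)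
    (hy : ∑ i, ‖y i‖ ^ 2 = 1) (hmax : d i₀ ≤ ‖∑ i, (d i : ℂ) * (x i * y i)‖) {i : ι}
    (hi : i ≠ i₀) : x i = 0 ∧ y i = 0 := by
  have hweight : (‖x i‖ ^ 2 + ‖y i‖ ^ 2) / 2 = 0 := by
    refine eq_zero_of_le_sum_mul (fun j => by positivity) ?_ (fun j => ?_)
      (hmax.trans (norm_sum_mul_mul_le hd x y)) (hgap i hi)
    · rw [← Finset.sum_div, Finset.sum_add_distrib, hx, hy]; norm_num
    · rcases eq_or_ne j i₀ with rfl | hj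
      · rfl
      · exact (hgap j hj).le
  obtain ⟨hx0, hy0⟩ := (add_eq_zero_iff_of_nonneg (by positivity) (by positivity)).1
    (by linarith : ‖x i‖ ^ 2 + ‖y i‖ ^ 2 = 0)
  exact ⟨by simpa using hx0, by simpa using hy0⟩

theorem stmt_2 (k : ℕ) (hk : 2 ≤ k)
    (Ψ U : Matrix (Fin k) (Fin k) ℂ) (d : Fin k → ℝ)
    (hU : U ∈ Matrix.unitaryGroup (Fin k) ℂ)
    (hfact : Ψ = U.transpose * Matrix.diagonal (fun i => (d i : ℂ)) * U)
    (hnonneg : ∀ i, 0 ≤ d i)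
    (hdec : ∀ i j : Fin k, i ≤ j → d j ≤ d i)
    (hgap : d ⟨1, by omega⟩ < d ⟨0, by omega⟩)
    (α β : Fin k → ℂ)
    (hα : ∑ i, ‖α i‖ ^ 2 = 1)
    (hβ : ∑ i, ‖β i‖ ^ 2 = 1)
    (hmax : ‖α ⬝ᵥ (Ψ *ᵥ β)‖ = d ⟨0, by omega⟩) :
    ∃ c c' : ℂ, ‖c‖ = 1 ∧ ‖c'‖ = 1 ∧
      α = c • (U.conjTranspose *ᵥ Pi.single ⟨0, by omega⟩ 1) ∧
      β = c' • (U.conjTranspose *ᵥ Pi.single ⟨0, by omega⟩ 1) := by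
  set i₀ : Fin k := ⟨0, by omega⟩
  have hα' := (sum_norm_sq_mulVec_of_mem_unitaryGroup hU α).trans hα
  have hβ' := (sum_norm_sq_mulVec_of_mem_unitaryGroup hU β).trans hβ
  have hlt : ∀ i, i ≠ i₀ → d i < d i₀ := fun i hi => by
    refine (hdec ⟨1, by omega⟩ i ?_).trans_lt hgap
    simpa [i₀, Fin.le_def, Fin.ext_iff, Nat.one_le_iff_ne_zero] using hi
  rw [hfact, dotProduct_transpose_mul_mul_mulVec, dotProduct_diagonal_mulVec] at hmax
  have hzero : ∀ i, i ≠ i₀ → _ := fun _ hi =>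
    eq_zero_of_le_norm_sum_mul_mul hnonneg hlt hα' hβ' hmax.ge hi
  obtain ⟨hc, hx⟩ := eq_smul_single_of_sum_norm_sq_eq_one hα' i₀ fun i hi => (hzero i hi).1
  obtain ⟨hc', hy⟩ := eq_smul_single_of_sum_norm_sq_eq_one hβ' i₀ fun i hi => (hzero i hi).2
  refine ⟨_, _, hc, hc', ?_, ?_⟩
  · rw [← mulVec_smul, ← hx, conjTranspose_mulVec_mulVec_of_mem_unitaryGroup hU]
  · rw [← mulVec_smul, ← hy, conjTranspose_mulVec_mulVec_of_mem_unitaryGroup hU]
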